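/- arXiv:1104.2664 — 5 statements merged into one kernel-verified Lean document; each statement's English description precedes it below -/
import Mathlib

section
/- Let $\mathfrak{g} = \mathfrak{h} \oplus \mathfrak{m}$ be a reductive decomposition of a finite-dimensional real Lie algebra, where $\mathfrak{m}$ carries an inner product $(\cdot,\cdot)$. Suppose the GO-condition holds: for every $X \in \mathfrak{m}$ there exists $H_X \in \mathfrak{h}$ with $([H_X + X, Y]_{\mathfrak{m}}, X) = 0$ for all $Y \in \mathfrak{m}$. Let $\mathfrak{m} = \mathfrak{m}_1 \oplus \mathfrak{m}_2$ be an orthogonal decomposition into $\operatorname{ad}(\mathfrak{h})$-invariant subspaces. Then for every $U \in \mathfrak{m}_1$ the operator $\operatorname{ad}_U^{\mathfrak{m}_2} : \mathfrak{m}_2 \to \mathfrak{m}_2$, $X \mapsto [U,X]_{\mathfrak{m}_2}$, is skew-symmetric, i.e. $([U,X]_{\mathfrak{m}_2}, X) = 0$ for all $X \in \mathfrak{m}_2$. -/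
/-- Lemma on GO reductive decompositions: if `𝔪 = 𝔪₁ ⊕ 𝔪₂` is an orthogonal
`ad(𝔥)`-invariant decomposition, then for `U ∈ 𝔪₁` the operator
`ad_U^{𝔪₂} : X ↦ [U,X]_{𝔪₂}` is skew-symmetric, i.e. `([U,X]_{𝔪₂}, X) = 0`
for all `X ∈ 𝔪₂`. Here `πm` is the projection of `𝔤` onto `𝔪` along `𝔥`, and the
`𝔪₂`-component of `[U,X]_𝔪` is expressed via a decomposition `W₁ + W₂`. -/
theorem stmt2 (𝔤 : Type*) [LieRing 𝔤] [LieAlgebra ℝ 𝔤] [Module.Finite ℝ 𝔤]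
    (h m : Submodule ℝ 𝔤) (hcompl : IsCompl h m)
    (hred : ∀ H ∈ h, ∀ X ∈ m, ⁅H, X⁆ ∈ m)
    -- the inner product on 𝔪 (a symmetric bilinear form, positive definite on 𝔪)
    (ip : 𝔤 →ₗ[ℝ] 𝔤 →ₗ[ℝ] ℝ)
    (ipsymm : ∀ X Y : 𝔤, ip X Y = ip Y X)
    (ippos : ∀ X ∈ m, X ≠ 0 → 0 < ip X X)
    -- the projection onto 𝔪 along 𝔥
    (πm : 𝔤 →ₗ[ℝ] 𝔤)
    (hπm : ∀ X ∈ m, πm X = X) (hπh : ∀ H ∈ h, πm H = 0)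
    -- ad(𝔥)-invariance of the inner product
    (hinv : ∀ H ∈ h, ∀ X ∈ m, ∀ Y ∈ m, ip (πm ⁅H, X⁆) Y + ip X (πm ⁅H, Y⁆) = 0)
    -- the GO-condition (Kowalski–Vanhecke criterion)
    (hGO : ∀ X ∈ m, ∃ H ∈ h, ∀ Y ∈ m, ip (πm ⁅H + X, Y⁆) X = 0)
    -- the orthogonal ad(𝔥)-invariant decomposition 𝔪 = 𝔪₁ ⊕ 𝔪₂
    (m1 m2 : Submodule ℝ 𝔤) (hsup : m1 ⊔ m2 = m) (hinf : m1 ⊓ m2 = ⊥)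
    (horth : ∀ X ∈ m1, ∀ Y ∈ m2, ip X Y = 0)
    (hinv1 : ∀ H ∈ h, ∀ X ∈ m1, ⁅H, X⁆ ∈ m1)
    (hinv2 : ∀ H ∈ h, ∀ X ∈ m2, ⁅H, X⁆ ∈ m2) :
    ∀ U ∈ m1, ∀ X ∈ m2, ∀ W1 ∈ m1, ∀ W2 ∈ m2,
      πm ⁅U, X⁆ = W1 + W2 → ip W2 X = 0 := by
  have hm1 : m1 ≤ m := hsup ▸ le_sup_left
  have hm2 : m2 ≤ m := hsup ▸ le_sup_right
  intro U hU X hX W1 hW1 W2 hW2 hdec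
  obtain ⟨H, hH, hGOX⟩ := hGO X (hm2 hX)
  have key := hGOX U (hm1 hU)
  have hHU : ⁅H, U⁆ ∈ m1 := hinv1 H hH U hU
  have e1 : πm ⁅H + X, U⁆ = ⁅H, U⁆ + πm ⁅X, U⁆ := by
    rw [add_lie, map_add, hπm _ (hm1 hHU)]
  rw [e1, map_add, LinearMap.add_apply] at key
  have e2 : ip ⁅H, U⁆ X = 0 := horth _ hHU _ hX
  have e3 : ip (πm ⁅X, U⁆) X = 0 := by linarith
  have e4 : ip (πm ⁅U, X⁆) X = 0 := by
    have : ⁅U, X⁆ = -⁅X, U⁆ := (lie_skew U X).symm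
    rw [this, map_neg, map_neg, LinearMap.neg_apply, e3, neg_zero]
  rw [hdec, map_add, LinearMap.add_apply, horth _ hW1 _ hX, zero_add] at e4
  exact e4
end

section
/- Let $\mathfrak{g} = \mathfrak{h} \oplus \mathfrak{m}$ be a reductive decomposition satisfying the GO-condition, and let $\mathfrak{m} = \mathfrak{m}_1 \oplus \mathfrak{m}_2$ be an orthogonal $\operatorname{ad}(\mathfrak{h})$-invariant decomposition with $[\mathfrak{h}, \mathfrak{m}_1] = 0$. Then for every $U \in \mathfrak{m}_1$ the operator $\operatorname{ad}_U^{\mathfrak{m}} : \mathfrak{m} \to \mathfrak{m}$, $X \mapsto [U,X]_{\mathfrak{m}}$, is skew-symmetric with respect to the inner product on $\mathfrak{m}$. -/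
/-- Lemma on GO reductive decompositions: if additionally `[𝔥, 𝔪₁] = 0`, then for every
`U ∈ 𝔪₁` the operator `ad_U^𝔪 : X ↦ [U,X]_𝔪` is skew-symmetric with respect to the
inner product on `𝔪`. -/
theorem stmt3 (𝔤 : Type*) [LieRing 𝔤] [LieAlgebra ℝ 𝔤] [Module.Finite ℝ 𝔤]
    (h m : Submodule ℝ 𝔤) (hcompl : IsCompl h m)
    (hred : ∀ H ∈ h, ∀ X ∈ m, ⁅H, X⁆ ∈ m)
    (ip : 𝔤 →ₗ[ℝ] 𝔤 →ₗ[ℝ] ℝ)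
    (ipsymm : ∀ X Y : 𝔤, ip X Y = ip Y X)
    (ippos : ∀ X ∈ m, X ≠ 0 → 0 < ip X X)
    (πm : 𝔤 →ₗ[ℝ] 𝔤)
    (hπm : ∀ X ∈ m, πm X = X) (hπh : ∀ H ∈ h, πm H = 0)
    (hinv : ∀ H ∈ h, ∀ X ∈ m, ∀ Y ∈ m, ip (πm ⁅H, X⁆) Y + ip X (πm ⁅H, Y⁆) = 0)
    (hGO : ∀ X ∈ m, ∃ H ∈ h, ∀ Y ∈ m, ip (πm ⁅H + X, Y⁆) X = 0)
    (m1 m2 : Submodule ℝ 𝔤) (hsup : m1 ⊔ m2 = m) (hinf : m1 ⊓ m2 = ⊥)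
    (horth : ∀ X ∈ m1, ∀ Y ∈ m2, ip X Y = 0)
    (hinv1 : ∀ H ∈ h, ∀ X ∈ m1, ⁅H, X⁆ ∈ m1)
    (hinv2 : ∀ H ∈ h, ∀ X ∈ m2, ⁅H, X⁆ ∈ m2)
    -- the additional hypothesis [𝔥, 𝔪₁] = 0
    (hcomm : ∀ H ∈ h, ∀ X ∈ m1, ⁅H, X⁆ = (0 : 𝔤)) :
    ∀ U ∈ m1, ∀ X ∈ m, ∀ Y ∈ m, ip (πm ⁅U, X⁆) Y + ip X (πm ⁅U, Y⁆) = 0 := by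
  intro U hU X hX Y hY
  have hUm : U ∈ m := by
    have : m1 ≤ m := hsup ▸ le_sup_left
    exact this hU
  -- Key: the "quadratic" vanishing ip (πm ⁅U,W⁆) W = 0 for all W ∈ m
  have hQ : ∀ W ∈ m, ip (πm ⁅U, W⁆) W = 0 := by
    intro W hW
    obtain ⟨H, hH, hall⟩ := hGO W hW
    have h1 := hall U hUm
    have h2 : ⁅H + W, U⁆ = ⁅W, U⁆ := by
      rw [add_lie, hcomm H hH U hU, zero_add]
    rw [h2] at h1
    rw [← lie_skew U W, map_neg, map_neg, LinearMap.neg_apply, h1, neg_zero]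
  have hXY : X + Y ∈ m := m.add_mem hX hY
  have e1 := hQ (X + Y) hXY
  have e2 := hQ X hX
  have e3 := hQ Y hY
  have expand : ip (πm ⁅U, X + Y⁆) (X + Y)
      = ip (πm ⁅U, X⁆) X + ip (πm ⁅U, X⁆) Y + ip (πm ⁅U, Y⁆) X + ip (πm ⁅U, Y⁆) Y := by
    rw [lie_add, map_add, map_add]
    simp only [LinearMap.add_apply, map_add]
    ring
  rw [expand, e2, e3] at e1
  have : ip (πm ⁅U, Y⁆) X = ip X (πm ⁅U, Y⁆) := ipsymm _ _
  linarith
end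

section
/- Let $\mathfrak{g} = \mathfrak{h} \oplus \mathfrak{m}$ be a reductive decomposition of a finite-dimensional real Lie algebra with an $\operatorname{ad}(\mathfrak{h})$-invariant inner product on $\mathfrak{m}$, satisfying the GO-condition. Then $\mathfrak{g}$ is unimodular: $\operatorname{trace}(\operatorname{ad}_X) = 0$ for every $X \in \mathfrak{g}$. -/
/-!
The modular character `f = trace ∘ ad` vanishes on brackets and, by hypothesis, on `𝔥`, so it
suffices to show that it vanishes on `𝔪`. Represent `f` on `𝔪` by some `X ∈ 𝔪` through the inner
product. Since `f` kills `⁅𝔥, 𝔪⁆`, the vector `X` is orthogonal to `⁅𝔥, 𝔪⁆`; the GO-condition for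
`Y` together with `ad(𝔥)`-invariance then gives `(⁅Y, X⁆_𝔪, Y) = 0`, i.e. the compression of
`ad X` to `𝔪` is skew-symmetric and hence traceless. As `ad X` maps `𝔥` into `𝔪`, its trace is
that of its compression, so `(X, X) = f X = 0`, and `X = 0`.
-/

open LinearMap Submodule

theorem LinearMap.trace_eq_trace_mul_of_isIdempotentElem {R M : Type*} [CommRing R]
    [AddCommGroup M] [Module R M] {P D : Module.End R M} (hP : IsIdempotentElem P)
    (hD : (1 - P) * D * (1 - P) = 0) : trace R M D = trace R M (P * D) := by
  have hQD : trace R M ((1 - P) * D) = 0 :=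
    calc trace R M ((1 - P) * D) = trace R M ((1 - P) * ((1 - P) * D)) := by
          rw [← mul_assoc, hP.one_sub.eq]
      _ = trace R M ((1 - P) * D * (1 - P)) := trace_mul_comm _ _ _
      _ = 0 := by rw [hD, map_zero]
  rw [← add_zero (trace R M (P * D)), ← hQD, ← map_add, ← add_mul, add_sub_cancel, one_mul]

theorem Submodule.eq_projection_of_forall {R E : Type*} [Ring R] [AddCommGroup E] [Module R E]
    {p q : Submodule R E} (hpq : IsCompl p q) {f : E →ₗ[R] E} (hp : ∀ x ∈ p, f x = x)
    (hq : ∀ x ∈ q, f x = 0) : f = p.projection q hpq := by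
  ext x
  obtain ⟨y, z, hy, hz, rfl⟩ := codisjoint_iff_exists_add_eq.mp hpq.codisjoint x
  rw [map_add, map_add, hp y hy, hq z hz, projection_apply_of_mem_left hpq hy,
    projection_apply_of_mem_right hpq hz]

theorem LinearMap.trace_eq_trace_restrict_projection_mul {K V : Type*} [Field K]
    [AddCommGroup V] [Module K V] [FiniteDimensional K V] {p q : Submodule K V}
    (hpq : IsCompl p q) {D : Module.End K V} (hD : ∀ x ∈ q, D x ∈ p) :
    trace K V D =
      trace K p ((p.projection q hpq * D).restrict fun _ _ ↦ projection_apply_mem hpq _) := by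
  rw [trace_restrict_eq_of_forall_mem]
  refine trace_eq_trace_mul_of_isIdempotentElem (isIdempotentElem_projection hpq) ?_
  ext x
  have hx : x - p.projection q hpq x ∈ q := sub_projection_mem hpq x
  simp only [Module.End.mul_apply, LinearMap.sub_apply, Module.End.one_apply, zero_apply,
    projection_apply_of_mem_left hpq (hD _ hx), sub_self]

namespace LinearMap.BilinForm

theorem IsSymm.isSkewAdjoint_of_forall_apply_self_eq_zero {R M : Type*} [CommRing R]
    [AddCommGroup M] [Module R M] {B : LinearMap.BilinForm R M} (hB : B.IsSymm)
    {T : Module.End R M} (hT : ∀ x, B (T x) x = 0) : B.IsSkewAdjoint T := by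
  intro x y
  have hxy := hT (x + y)
  simp only [map_add, LinearMap.add_apply, hT x, hT y] at hxy
  rw [Pi.neg_apply, map_neg, hB.eq x (T y)]
  linear_combination hxy

variable {K V : Type*} [Field K] [AddCommGroup V] [Module K V]

theorem IsSkewAdjoint.trace_eq_zero [CharZero K] [FiniteDimensional K V]
    {B : LinearMap.BilinForm K V} (hB : B.Nondegenerate) {T : Module.End K V}
    (hT : B.IsSkewAdjoint T) : trace K V T = 0 := by
  have hconj : (B.toDual hB).symm.conj (Module.Dual.transpose (R := K) T) = -T := by
    ext x
    apply (B.toDual hB).injective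
    ext y
    simp only [LinearEquiv.conj_apply_apply, LinearEquiv.apply_symm_apply, LinearEquiv.symm_symm,
      Module.Dual.transpose_apply, toDual_def, LinearMap.comp_apply]
    rw [LinearMap.neg_apply, map_neg, LinearMap.neg_apply, hT x y, Pi.neg_apply, map_neg, neg_neg]
  have htr := trace_conj' (Module.Dual.transpose (R := K) T) (B.toDual hB).symm
  rw [hconj, trace_transpose', map_neg, eq_comm] at htr
  exact self_eq_neg.mp htr

variable [PartialOrder K]

theorem nondegenerate_restrict_of_pos (B : LinearMap.BilinForm K V) (p : Submodule K V)
    (hpos : ∀ x ∈ p, x ≠ 0 → 0 < B x x) : (B.restrict p).Nondegenerate := by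
  have hsep : ∀ x : p, B x x = 0 → x = 0 := fun x hx ↦ by
    by_contra hne
    exact (hpos x x.2 (by simpa using hne)).ne' hx
  exact ⟨fun x hx ↦ hsep x (hx x), fun y hy ↦ hsep y (hy y)⟩

theorem exists_mem_forall_apply_eq_of_pos (B : LinearMap.BilinForm K V) (p : Submodule K V)
    [FiniteDimensional K p] (hpos : ∀ x ∈ p, x ≠ 0 → 0 < B x x) (φ : V →ₗ[K] K) :
    ∃ x ∈ p, ∀ y ∈ p, B x y = φ y := by
  set x := ((B.restrict p).toDual (nondegenerate_restrict_of_pos B p hpos)).symm (φ ∘ₗ p.subtype)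
  exact ⟨x, x.2, fun y hy ↦ apply_toDual_symm_apply (B := B.restrict p) _ ⟨y, hy⟩⟩

end LinearMap.BilinForm

namespace LieAlgebra

section ModularCharacter

attribute [local instance] LieRing.ofAssociativeRing

variable (R L : Type*) [CommRing R] [LieRing L] [LieAlgebra R L]

noncomputable def modularCharacter : L →ₗ[R] R :=
  trace R L ∘ₗ (ad R L).toLinearMap

theorem modularCharacter_apply (x : L) : modularCharacter R L x = trace R L (ad R L x) := rfl

theorem modularCharacter_lie (x y : L) : modularCharacter R L ⁅x, y⁆ = 0 := by
  rw [modularCharacter_apply, LieHom.map_lie, trace_lie]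

end ModularCharacter

theorem apply_lie_self_eq_zero_of_geodesicOrbit {R L : Type*} [CommRing R]
    [LieRing L] [LieAlgebra R L] {h m : Submodule R L} {B : L →ₗ[R] L →ₗ[R] R} {π : L →ₗ[R] L}
    (hinv : ∀ H ∈ h, ∀ X ∈ m, ∀ Y ∈ m, B (π ⁅H, X⁆) Y + B X (π ⁅H, Y⁆) = 0)
    (hGO : ∀ X ∈ m, ∃ H ∈ h, ∀ Y ∈ m, B (π ⁅H + X, Y⁆) X = 0)
    {X : L} (hX : X ∈ m) (hXperp : ∀ H ∈ h, ∀ Y ∈ m, B X (π ⁅H, Y⁆) = 0) :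
    ∀ Y ∈ m, B (π ⁅Y, X⁆) Y = 0 := by
  intro Y hY
  obtain ⟨H, hH, hGOY⟩ := hGO Y hY
  have hHX : B (π ⁅H, X⁆) Y = 0 := by
    linear_combination hinv H hH X hX Y hY - hXperp H hH Y hY
  simpa only [add_lie, map_add, LinearMap.add_apply, hHX, zero_add] using hGOY X hX

theorem trace_ad_eq_zero_of_forall_apply_projection_lie_self_eq_zero {K L : Type*} [Field K]
    [LinearOrder K] [IsStrictOrderedRing K] [LieRing L] [LieAlgebra K L] [FiniteDimensional K L]
    {h m : Submodule K L} (hmh : IsCompl m h) (hred : ∀ H ∈ h, ∀ X ∈ m, ⁅H, X⁆ ∈ m)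
    (B : LinearMap.BilinForm K L) (hsymm : ∀ x y, B x y = B y x)
    (hpos : ∀ x ∈ m, x ≠ 0 → 0 < B x x) {X : L} (hX : X ∈ m)
    (hskew : ∀ Y ∈ m, B (m.projection h hmh ⁅Y, X⁆) Y = 0) :
    trace K L (ad K L X) = 0 := by
  have hD : ∀ H ∈ h, ad K L X H ∈ m := fun H hH ↦ by
    rw [ad_apply, ← lie_skew]
    exact neg_mem (hred H hH X hX)
  rw [trace_eq_trace_restrict_projection_mul hmh hD]
  refine BilinForm.IsSkewAdjoint.trace_eq_zero
    (BilinForm.nondegenerate_restrict_of_pos B m hpos) ?_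
  refine BilinForm.IsSymm.isSkewAdjoint_of_forall_apply_self_eq_zero (B := B.restrict m)
    ⟨fun x y ↦ hsymm x y⟩ fun y ↦ ?_
  change B (m.projection h hmh ⁅X, y⁆) y = 0
  rw [← lie_skew, map_neg, map_neg, LinearMap.neg_apply, hskew y y.2, neg_zero]

end LieAlgebra

open LieAlgebra in
theorem stmt4_general (𝔤 : Type*) [LieRing 𝔤] [LieAlgebra ℝ 𝔤] [Module.Finite ℝ 𝔤]
    (h m : Submodule ℝ 𝔤) (hcompl : IsCompl h m)
    (hred : ∀ H ∈ h, ∀ X ∈ m, ⁅H, X⁆ ∈ m)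
    (ip : 𝔤 →ₗ[ℝ] 𝔤 →ₗ[ℝ] ℝ)
    (ipsymm : ∀ X Y : 𝔤, ip X Y = ip Y X)
    (ippos : ∀ X ∈ m, X ≠ 0 → 0 < ip X X)
    (πm : 𝔤 →ₗ[ℝ] 𝔤)
    (hπm : ∀ X ∈ m, πm X = X) (hπh : ∀ H ∈ h, πm H = 0)
    (hinv : ∀ H ∈ h, ∀ X ∈ m, ∀ Y ∈ m, ip (πm ⁅H, X⁆) Y + ip X (πm ⁅H, Y⁆) = 0)
    (hGO : ∀ X ∈ m, ∃ H ∈ h, ∀ Y ∈ m, ip (πm ⁅H + X, Y⁆) X = 0)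
    -- 𝔥 is the Lie algebra of a compact group, hence trace(ad_H) = 0 for H ∈ 𝔥
    (htrh : ∀ H ∈ h, LinearMap.trace ℝ 𝔤 (LieAlgebra.ad ℝ 𝔤 H) = 0) :
    ∀ X : 𝔤, LinearMap.trace ℝ 𝔤 (LieAlgebra.ad ℝ 𝔤 X) = 0 := by
  obtain rfl := eq_projection_of_forall hcompl.symm hπm hπh
  obtain ⟨X, hXm, hX⟩ :=
    BilinForm.exists_mem_forall_apply_eq_of_pos ip m ippos (modularCharacter ℝ 𝔤)
  have hXperp : ∀ H ∈ h, ∀ Y ∈ m, ip X (m.projection h hcompl.symm ⁅H, Y⁆) = 0 := by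
    intro H hH Y hY
    rw [projection_apply_of_mem_left _ (hred H hH Y hY), hX _ (hred H hH Y hY),
      modularCharacter_lie]
  have hXX : ip X X = 0 := by
    rw [hX X hXm, modularCharacter_apply]
    exact trace_ad_eq_zero_of_forall_apply_projection_lie_self_eq_zero hcompl.symm hred ip ipsymm
      ippos hXm (apply_lie_self_eq_zero_of_geodesicOrbit hinv hGO hXm hXperp)
  have hX0 : X = 0 := by
    by_contra hne
    exact (ippos X hXm hne).ne' hXX
  intro Z
  obtain ⟨H, Y, hH, hY, rfl⟩ := codisjoint_iff_exists_add_eq.mp hcompl.codisjoint Z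
  rw [← modularCharacter_apply, map_add, modularCharacter_apply, htrh H hH, ← hX Y hY, hX0,
    map_zero, LinearMap.zero_apply, zero_add]

/-- Gordon's lemma: a reductive decomposition `𝔤 = 𝔥 ⊕ 𝔪` with `ad(𝔥)`-invariant inner
product on `𝔪` satisfying the GO-condition forces `𝔤` to be unimodular:
`trace(ad_X) = 0` for all `X ∈ 𝔤`. -/
theorem stmt4 (𝔤 : Type*) [LieRing 𝔤] [LieAlgebra ℝ 𝔤] [Module.Finite ℝ 𝔤]
    (h m : Submodule ℝ 𝔤) (hcompl : IsCompl h m)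
    (hred : ∀ H ∈ h, ∀ X ∈ m, ⁅H, X⁆ ∈ m)
    (ip : 𝔤 →ₗ[ℝ] 𝔤 →ₗ[ℝ] ℝ)
    (ipsymm : ∀ X Y : 𝔤, ip X Y = ip Y X)
    (ippos : ∀ X ∈ m, X ≠ 0 → 0 < ip X X)
    (πm : 𝔤 →ₗ[ℝ] 𝔤)
    (hπm : ∀ X ∈ m, πm X = X) (hπh : ∀ H ∈ h, πm H = 0)
    (hinv : ∀ H ∈ h, ∀ X ∈ m, ∀ Y ∈ m, ip (πm ⁅H, X⁆) Y + ip X (πm ⁅H, Y⁆) = 0)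
    (hGO : ∀ X ∈ m, ∃ H ∈ h, ∀ Y ∈ m, ip (πm ⁅H + X, Y⁆) X = 0)
    -- effectivity: 𝔥 contains no nonzero ideal of 𝔤
    (heff : ∀ I : LieIdeal ℝ 𝔤, (I : Submodule ℝ 𝔤) ≤ h → I = ⊥)
    -- 𝔥 is the Lie algebra of a compact group, hence trace(ad_H) = 0 for H ∈ 𝔥
    (htrh : ∀ H ∈ h, LinearMap.trace ℝ 𝔤 (LieAlgebra.ad ℝ 𝔤 H) = 0) :
    ∀ X : 𝔤, LinearMap.trace ℝ 𝔤 (LieAlgebra.ad ℝ 𝔤 X) = 0 :=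
  stmt4_general 𝔤 h m hcompl hred ip ipsymm ippos πm hπm hπh hinv hGO htrh
end

section
/- Let $(M,g)$ be a GO-manifold with Lie algebra of Killing fields $\mathfrak{g}$, let $\mathfrak{a}$ be an abelian ideal of $\mathfrak{g}$, $X \in \mathfrak{a}$, and $x \in M$. If $Y \in \mathfrak{g}$ satisfies $g_x(Y, U) = 0$ for all $U \in \mathfrak{a}$, then $g_x([Y,X],X) = 0$. -/
/-- Key step: on a GO-manifold, if `𝔞` is an abelian ideal of the Lie algebra of Killing
fields `𝔤`, `X ∈ 𝔞`, and `Y` is a Killing field with `g_x(Y,U) = 0` for all `U ∈ 𝔞`,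
then `g_x([Y,X],X) = 0`. Notation as in the GO framework: `ip x X Y = g_x(X(x),Y(x))`,
`zeroAt W x` means `W(x) = 0`. -/
theorem stmt8 (M 𝔤 : Type*) [LieRing 𝔤] [LieAlgebra ℝ 𝔤]
    (ip : M → 𝔤 → 𝔤 → ℝ)
    (ipsymm : ∀ (x : M) (X Y : 𝔤), ip x X Y = ip x Y X)
    (ipadd : ∀ (x : M) (X Y Z : 𝔤), ip x (X + Y) Z = ip x X Z + ip x Y Z)
    (D : 𝔤 → (M → ℝ) → M → ℝ)
    (hKilling : ∀ (W Y Z : 𝔤) (x : M),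
      D W (fun y => ip y Y Z) x = ip x ⁅W, Y⁆ Z + ip x Y ⁅W, Z⁆)
    (zeroAt : 𝔤 → M → Prop)
    (hzeroIp : ∀ (W : 𝔤) (x : M), zeroAt W x → ∀ Y : 𝔤, ip x W Y = 0)
    (hzeroD : ∀ (W : 𝔤) (x : M), zeroAt W x → ∀ f : M → ℝ, D W f x = 0)
    -- the geodesic orbit property
    (hGO : ∀ (x : M) (X : 𝔤), ∃ Z : 𝔤, zeroAt (X - Z) x ∧ ∀ V : 𝔤, ip x ⁅V, Z⁆ Z = 0)
    -- 𝔞 is an abelian ideal of 𝔤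
    (a : LieIdeal ℝ 𝔤) (habelian : ∀ X ∈ a, ∀ Y ∈ a, ⁅X, Y⁆ = (0 : 𝔤))
    (X : 𝔤) (hX : X ∈ a) (x : M)
    (Y : 𝔤) (hY : ∀ U ∈ a, ip x Y U = 0) :
    ip x ⁅Y, X⁆ X = 0 := by
  obtain ⟨Z, hW, hZ⟩ := hGO x X
  set W := X - Z with hWdef
  -- basic linearity facts
  have ipzero : ∀ B : 𝔤, ip x 0 B = 0 := by
    intro B
    have h := ipadd x 0 0 B
    simp at h
    linarith
  have ipneg : ∀ A B : 𝔤, ip x (-A) B = - ip x A B := by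
    intro A B
    have h := ipadd x A (-A) B
    simp [ipzero] at h
    linarith
  have ipadd2 : ∀ A B C : 𝔤, ip x A (B + C) = ip x A B + ip x A C := by
    intro A B C
    rw [ipsymm, ipadd, ipsymm x B A, ipsymm x C A]
  have hXeq : X = Z + W := by simp [hWdef]
  -- the term ip x ⁅Y,W⁆ Z vanishes
  have hZX : ⁅W, Z⁆ = ⁅W, X⁆ := by
    have : Z = X - W := by simp [hWdef]
    rw [this, lie_sub, lie_self, sub_zero]
  have hWXa : ⁅W, X⁆ ∈ a := a.lie_mem hX
  have hK := hKilling W Y Z x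
  rw [hzeroD W x hW] at hK
  have h1 : ip x ⁅Y, W⁆ Z = 0 := by
    have : ⁅Y, W⁆ = -⁅W, Y⁆ := (lie_skew Y W).symm
    rw [this, ipneg]
    have h2 : ip x Y ⁅W, Z⁆ = 0 := by rw [hZX]; exact hY _ hWXa
    rw [h2] at hK
    linarith
  have hWip : ∀ B : 𝔤, ip x B W = 0 := by
    intro B; rw [ipsymm]; exact hzeroIp W x hW B
  calc ip x ⁅Y, X⁆ X = ip x ⁅Y, Z + W⁆ (Z + W) := by rw [← hXeq]
    _ = ip x (⁅Y, Z⁆ + ⁅Y, W⁆) (Z + W) := by rw [lie_add]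
    _ = ip x ⁅Y, Z⁆ Z + ip x ⁅Y, Z⁆ W + (ip x ⁅Y, W⁆ Z + ip x ⁅Y, W⁆ W) := by
        rw [ipadd, ipadd2, ipadd2]
    _ = 0 := by rw [hZ Y, h1, hWip, hWip]; ring
end

section
/- Let $\mathfrak{g} = \mathfrak{h} \oplus \mathfrak{m}$ be a reductive decomposition with $\operatorname{ad}(\mathfrak{h})$-invariant inner product on $\mathfrak{m}$ satisfying the GO-condition, and let $\mathfrak{m} = \mathfrak{m}_1 \oplus \mathfrak{m}_2$ be an orthogonal $\operatorname{ad}(\mathfrak{h})$-invariant splitting. Let $(Y_i)$ be an orthonormal basis of $\mathfrak{m}_2$. Then for every $X \in \mathfrak{m}_1$, $B_{\mathfrak{g}}(X,X) = B_{\mathfrak{k}}(X,X) - \sum_i |[X,Y_i]_{\mathfrak{m}_2}|^2$, where $B_{\mathfrak{g}}$ is the Killing form of $\mathfrak{g}$, $\mathfrak{k} = \mathfrak{h} \oplus \mathfrak{m}_1$ is assumed to be a subalgebra, and $B_{\mathfrak{k}}$ is its Killing form. -/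
/-!
The splitting `𝔤 = 𝔨 ⊕ 𝔪₂` is invariant under `ad X` for `X ∈ 𝔪₁ ⊆ 𝔨`, so the trace of
`(ad X)²` defining `B_𝔤(X,X)` is `B_𝔨(X,X)` plus the trace of `(ad X)²` on `𝔪₂`. Applying the
GO-condition to `X + Y` with `Y ∈ 𝔪₂` and using the invariance of the inner product and the
orthogonality of `𝔪₁` and `𝔪₂` gives `([X,Y],Y) = 0`; hence `ad X` is skew on `𝔪₂`, and its square
has trace `-∑ᵢ |[X,Yᵢ]|²` in the orthonormal basis `(Yᵢ)`.
-/

namespace LinearMap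

variable {R M : Type*} [CommRing R] [AddCommGroup M] [Module R M]

theorem trace_eq_trace_restrict_add_trace_restrict_of_isCompl {𝕜 V : Type*} [Field 𝕜]
    [AddCommGroup V] [Module 𝕜 V] [FiniteDimensional 𝕜 V] {p q : Submodule 𝕜 V}
    (hpq : IsCompl p q) {f : V →ₗ[𝕜] V} (hp : Set.MapsTo f p p) (hq : Set.MapsTo f q q) :
    trace 𝕜 V f = trace 𝕜 p (f.restrict hp) + trace 𝕜 q (f.restrict hq) := by
  let N : Bool → Submodule 𝕜 V := fun b => bif b then p else q
  have hN : DirectSum.IsInternal N :=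
    (DirectSum.isInternal_submodule_iff_isCompl N (i := true) (j := false) Bool.true_eq_false.mp
      (by ext b; cases b <;> simp)).mpr hpq
  rw [trace_eq_sum_trace_restrict hN (f := f) (fun b => by cases b <;> assumption),
    Fintype.sum_bool]
  rfl

theorem apply_apply_add_apply_apply_eq_zero_of_apply_self_eq_zero (B : M →ₗ[R] M →ₗ[R] R)
    {p : Submodule R M} {f : M →ₗ[R] M} (hf : ∀ y ∈ p, B (f y) y = 0) {y z : M}
    (hy : y ∈ p) (hz : z ∈ p) : B (f y) z + B (f z) y = 0 := by
  have hyz := hf (y + z) (p.add_mem hy hz)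
  simp only [map_add, add_apply, hf y hy, hf z hz] at hyz
  linear_combination hyz

theorem trace_restrict_eq_sum_of_orthonormal {ι : Type*} [Fintype ι] [DecidableEq ι]
    (B : M →ₗ[R] M →ₗ[R] R) {p : Submodule R M} (Y : ι → M) (hYmem : ∀ i, Y i ∈ p)
    (hONB : ∀ i j, B (Y i) (Y j) = if i = j then 1 else 0)
    (hYspan : Submodule.span R (Set.range Y) = p) {f : M →ₗ[R] M} (hf : Set.MapsTo f p p) :
    trace R p (f.restrict hf) = ∑ i, B (f (Y i)) (Y i) := by
  let Y' : ι → p := fun i => ⟨Y i, hYmem i⟩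
  have hcoeff : ∀ (c : ι → R) j, B (∑ i, c i • Y i) (Y j) = c j := by
    intro c j
    simp [hONB, Finset.sum_ite_eq']
  have hli : LinearIndependent R Y' := by
    refine Fintype.linearIndependent_iff.mpr fun c hc j => ?_
    have h0 : ∑ i, c i • Y i = 0 := by simpa [Y'] using congrArg Subtype.val hc
    simpa [h0] using (hcoeff c j).symm
  have hspan : ⊤ ≤ Submodule.span R (Set.range Y') := by
    refine (Submodule.map_injective_of_injective p.injective_subtype ?_).ge
    rw [Submodule.map_span, Submodule.map_top, Submodule.range_subtype, ← Set.range_comp]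
    exact hYspan
  let b := Module.Basis.mk hli hspan
  have hrepr : ∀ (w : p) j, b.repr w j = B w (Y j) := by
    intro w j
    conv_rhs => rw [← b.sum_repr w]
    simpa [b, Y'] using (hcoeff _ j).symm
  rw [trace_eq_matrix_trace R b, Matrix.trace]
  refine Finset.sum_congr rfl fun j _ => ?_
  rw [Matrix.diag_apply, toMatrix_apply, hrepr, Module.Basis.mk_apply]
  rfl

end LinearMap

theorem killingForm_eq_killingForm_add_trace_restrict {R L : Type*} [Field R] [LieRing L]
    [LieAlgebra R L] [FiniteDimensional R L] {K : LieSubalgebra R L} {q : Submodule R L}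
    (hKq : IsCompl K.toSubmodule q) (x y : K)
    (hxy : Set.MapsTo (LieAlgebra.ad R L x ∘ₗ LieAlgebra.ad R L y) q q) :
    killingForm R L x y =
      killingForm R K x y +
        LinearMap.trace R q ((LieAlgebra.ad R L x ∘ₗ LieAlgebra.ad R L y).restrict hxy) := by
  have hK : Set.MapsTo (LieAlgebra.ad R L x ∘ₗ LieAlgebra.ad R L y) K K :=
    fun u hu => K.lie_mem x.2 (K.lie_mem y.2 hu)
  rw [killingForm_apply_apply,
    LinearMap.trace_eq_trace_restrict_add_trace_restrict_of_isCompl hKq hK hxy,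
    killingForm_apply_apply]
  rfl

section GOCondition

variable {𝔤 : Type*} [LieRing 𝔤] [LieAlgebra ℝ 𝔤] {h m m1 m2 : Submodule ℝ 𝔤}
  {ip : 𝔤 →ₗ[ℝ] 𝔤 →ₗ[ℝ] ℝ} {πm : 𝔤 →ₗ[ℝ] 𝔤}

theorem ip_lie_self_eq_zero_of_go (ipsymm : ∀ X Y : 𝔤, ip X Y = ip Y X)
    (hπm : ∀ X ∈ m, πm X = X)
    (hinv : ∀ H ∈ h, ∀ X ∈ m, ∀ Y ∈ m, ip (πm ⁅H, X⁆) Y + ip X (πm ⁅H, Y⁆) = 0)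
    (hGO : ∀ X ∈ m, ∃ H ∈ h, ∀ Y ∈ m, ip (πm ⁅H + X, Y⁆) X = 0)
    (hm1 : m1 ≤ m) (hm2 : m2 ≤ m) (horth : ∀ X ∈ m1, ∀ Y ∈ m2, ip X Y = 0)
    (hinv2 : ∀ H ∈ h, ∀ X ∈ m2, ⁅H, X⁆ ∈ m2)
    {X : 𝔤} (hX : X ∈ m1) (hXm2 : ∀ Y ∈ m2, ⁅X, Y⁆ ∈ m2) {Y : 𝔤} (hY : Y ∈ m2) :
    ip ⁅X, Y⁆ Y = 0 := by
  obtain ⟨H, hH, hGO_XY⟩ := hGO (X + Y) (m.add_mem (hm1 hX) (hm2 hY))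
  have hHY : ⁅H, Y⁆ ∈ m2 := hinv2 H hH Y hY
  have hXY : ⁅X, Y⁆ ∈ m2 := hXm2 Y hY
  have hHYY : ip ⁅H, Y⁆ Y = 0 := by
    have := hinv H hH Y (hm2 hY) Y (hm2 hY)
    rw [hπm _ (hm2 hHY), ipsymm Y] at this
    linarith
  have hHYX : ip ⁅H, Y⁆ X = 0 := by rw [ipsymm]; exact horth X hX _ hHY
  have hXYX : ip ⁅X, Y⁆ X = 0 := by rw [ipsymm]; exact horth X hX _ hXY
  have := hGO_XY Y (hm2 hY)
  rw [add_lie, add_lie, lie_self, add_zero, πm.map_add, hπm _ (hm2 hHY), hπm _ (hm2 hXY)] at this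
  simp only [map_add, LinearMap.add_apply, hHYY, hHYX, hXYX] at this
  linarith

end GOCondition

theorem stmt11_general (𝔤 : Type*) [LieRing 𝔤] [LieAlgebra ℝ 𝔤] [Module.Finite ℝ 𝔤]
    (h m : Submodule ℝ 𝔤) (hcompl : IsCompl h m)
    (ip : 𝔤 →ₗ[ℝ] 𝔤 →ₗ[ℝ] ℝ)
    (ipsymm : ∀ X Y : 𝔤, ip X Y = ip Y X)
    (πm : 𝔤 →ₗ[ℝ] 𝔤)
    (hπm : ∀ X ∈ m, πm X = X)
    (hinv : ∀ H ∈ h, ∀ X ∈ m, ∀ Y ∈ m, ip (πm ⁅H, X⁆) Y + ip X (πm ⁅H, Y⁆) = 0)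
    -- the GO-condition
    (hGO : ∀ X ∈ m, ∃ H ∈ h, ∀ Y ∈ m, ip (πm ⁅H + X, Y⁆) X = 0)
    -- the orthogonal ad(𝔥)-invariant splitting 𝔪 = 𝔪₁ ⊕ 𝔪₂
    (m1 m2 : Submodule ℝ 𝔤) (hsup : m1 ⊔ m2 = m) (hinf : m1 ⊓ m2 = ⊥)
    (horth : ∀ X ∈ m1, ∀ Y ∈ m2, ip X Y = 0)
    (hinv2 : ∀ H ∈ h, ∀ X ∈ m2, ⁅H, X⁆ ∈ m2)
    -- 𝔨 = 𝔥 ⊕ 𝔪₁, a subalgebra of 𝔤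
    (K : LieSubalgebra ℝ 𝔤) (hK : K.toSubmodule = h ⊔ m1)
    -- [𝔨, 𝔪₂] ⊆ 𝔪₂
    (hKm2 : ∀ U ∈ K, ∀ Y ∈ m2, ⁅U, Y⁆ ∈ m2)
    -- an orthonormal basis (Yᵢ) of 𝔪₂
    (ι : Type*) [Fintype ι] [DecidableEq ι] (Yb : ι → 𝔤) (hYmem : ∀ i, Yb i ∈ m2)
    (hONB : ∀ i j, ip (Yb i) (Yb j) = if i = j then (1 : ℝ) else 0)
    (hYspan : Submodule.span ℝ (Set.range Yb) = m2) :
    ∀ X : 𝔤, ∀ _ : X ∈ m1, ∀ hXK : X ∈ K,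
      killingForm ℝ 𝔤 X X =
        killingForm ℝ K ⟨X, hXK⟩ ⟨X, hXK⟩
          - ∑ i, ip ⁅X, Yb i⁆ ⁅X, Yb i⁆ := by
  intro X hXm1 hXK
  have hm1 : m1 ≤ m := hsup ▸ le_sup_left
  have hm2 : m2 ≤ m := hsup ▸ le_sup_right
  have hXm2 : ∀ Y ∈ m2, ⁅X, Y⁆ ∈ m2 := hKm2 X hXK
  have hKcompl : IsCompl K.toSubmodule m2 :=
    hK ▸ (disjoint_iff.mpr hinf).isCompl_sup_left_of_isCompl_sup_right (hsup ▸ hcompl)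
  have hskew : ∀ Y ∈ m2, ∀ Z ∈ m2, ip ⁅X, Y⁆ Z + ip ⁅X, Z⁆ Y = 0 := fun Y hY Z hZ =>
    LinearMap.apply_apply_add_apply_apply_eq_zero_of_apply_self_eq_zero ip
      (f := LieAlgebra.ad ℝ 𝔤 X)
      (fun _ hW => ip_lie_self_eq_zero_of_go ipsymm hπm hinv hGO hm1 hm2 horth hinv2 hXm1 hXm2 hW)
      hY hZ
  have hmaps : Set.MapsTo (LieAlgebra.ad ℝ 𝔤 X ∘ₗ LieAlgebra.ad ℝ 𝔤 X) m2 m2 :=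
    fun Y hY => hXm2 _ (hXm2 Y hY)
  rw [killingForm_eq_killingForm_add_trace_restrict hKcompl ⟨X, hXK⟩ ⟨X, hXK⟩ hmaps,
    LinearMap.trace_restrict_eq_sum_of_orthonormal ip Yb hYmem hONB hYspan, sub_eq_add_neg,
    ← Finset.sum_neg_distrib]
  congr 1
  refine Finset.sum_congr rfl fun i _ => ?_
  have := hskew _ (hXm2 _ (hYmem i)) _ (hYmem i)
  rw [ipsymm ⁅X, Yb i⁆] at this
  simp only [LinearMap.comp_apply, LieAlgebra.ad_apply]
  linarith

/-- Killing form comparison in a GO reductive decomposition: for `X ∈ 𝔪₁`,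
`B_𝔤(X,X) = B_𝔨(X,X) - ∑ᵢ |[X,Yᵢ]_{𝔪₂}|²`, where `𝔨 = 𝔥 ⊕ 𝔪₁` is a subalgebra,
`[𝔨, 𝔪₂] ⊆ 𝔪₂`, and `(Yᵢ)` is an orthonormal basis of `𝔪₂`. -/
theorem stmt11 (𝔤 : Type*) [LieRing 𝔤] [LieAlgebra ℝ 𝔤] [Module.Finite ℝ 𝔤]
    (h m : Submodule ℝ 𝔤) (hcompl : IsCompl h m)
    (hred : ∀ H ∈ h, ∀ X ∈ m, ⁅H, X⁆ ∈ m)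
    (ip : 𝔤 →ₗ[ℝ] 𝔤 →ₗ[ℝ] ℝ)
    (ipsymm : ∀ X Y : 𝔤, ip X Y = ip Y X)
    (ippos : ∀ X ∈ m, X ≠ 0 → 0 < ip X X)
    (πm : 𝔤 →ₗ[ℝ] 𝔤)
    (hπm : ∀ X ∈ m, πm X = X) (hπh : ∀ H ∈ h, πm H = 0)
    (hinv : ∀ H ∈ h, ∀ X ∈ m, ∀ Y ∈ m, ip (πm ⁅H, X⁆) Y + ip X (πm ⁅H, Y⁆) = 0)
    -- the GO-condition
    (hGO : ∀ X ∈ m, ∃ H ∈ h, ∀ Y ∈ m, ip (πm ⁅H + X, Y⁆) X = 0)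
    -- the orthogonal ad(𝔥)-invariant splitting 𝔪 = 𝔪₁ ⊕ 𝔪₂
    (m1 m2 : Submodule ℝ 𝔤) (hsup : m1 ⊔ m2 = m) (hinf : m1 ⊓ m2 = ⊥)
    (horth : ∀ X ∈ m1, ∀ Y ∈ m2, ip X Y = 0)
    (hinv1 : ∀ H ∈ h, ∀ X ∈ m1, ⁅H, X⁆ ∈ m1)
    (hinv2 : ∀ H ∈ h, ∀ X ∈ m2, ⁅H, X⁆ ∈ m2)
    -- 𝔨 = 𝔥 ⊕ 𝔪₁, a subalgebra of 𝔤
    (K : LieSubalgebra ℝ 𝔤) (hK : K.toSubmodule = h ⊔ m1)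
    -- [𝔨, 𝔪₂] ⊆ 𝔪₂
    (hKm2 : ∀ U ∈ K, ∀ Y ∈ m2, ⁅U, Y⁆ ∈ m2)
    -- an orthonormal basis (Yᵢ) of 𝔪₂
    (ι : Type*) [Fintype ι] [DecidableEq ι] (Yb : ι → 𝔤) (hYmem : ∀ i, Yb i ∈ m2)
    (hONB : ∀ i j, ip (Yb i) (Yb j) = if i = j then (1 : ℝ) else 0)
    (hYspan : Submodule.span ℝ (Set.range Yb) = m2) :
    ∀ X : 𝔤, ∀ _ : X ∈ m1, ∀ hXK : X ∈ K,
      killingForm ℝ 𝔤 X X =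
        killingForm ℝ K ⟨X, hXK⟩ ⟨X, hXK⟩
          - ∑ i, ip ⁅X, Yb i⁆ ⁅X, Yb i⁆ :=
  stmt11_general 𝔤 h m hcompl ip ipsymm πm hπm hinv hGO m1 m2 hsup hinf horth hinv2 K hK hKm2 ι Yb
    hYmem hONB hYspan
end
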